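/- For every u ∈ H¹(ℝ^N)\{0}, the functions v₁(u) and v₂(u) are linearly independent in H¹(ℝ^N), and for every v in the linear span of {v₁(u), v₂(u)} one has J(v) ≤ μ₂(u) · ∫_{ℝ^N} |u(x)|^{p−2} v² dx. -/

import Mathlib

open MeasureTheory Filter Topology Metric

noncomputable section

namespace ScalarField

/-- `p` is a subcritical exponent: `2 < p < 2*` where `2* = 2N/(N-2)` if `N ≥ 3`
and `2* = ∞` if `N = 2`. -/
def Subcritical (N : ℕ) (p : ℝ) : Prop :=
  2 < p ∧ (3 ≤ N → p < 2 * N / (N - 2))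

variable {N : ℕ}

/-- Membership in the Sobolev space `H¹(ℝ^N)`: `u` and its gradient are in `L²`. -/
def InH1 (u : EuclideanSpace ℝ (Fin N) → ℝ) : Prop :=
  MemLp u 2 volume ∧ Differentiable ℝ u ∧
    MemLp (fun x => ‖gradient u x‖) 2 volume

/-- The quadratic functional `J(u) = ∫ |∇u|² + V(x) u²`. -/
def Jf (V u : EuclideanSpace ℝ (Fin N) → ℝ) : ℝ :=
  ∫ x, (‖gradient u x‖ ^ 2 + V x * u x ^ 2)

/-- `I(u) = ∫ |u|^p`. -/
def If (p : ℝ) (u : EuclideanSpace ℝ (Fin N) → ℝ) : ℝ :=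
  ∫ x, |u x| ^ p

/-- The manifold `M = {u ∈ H¹ : I(u) = 1}`. -/
def Msphere (N : ℕ) (p : ℝ) : Set (EuclideanSpace ℝ (Fin N) → ℝ) :=
  {u | InH1 u ∧ If p u = 1}

/-- Square of the standard `H¹` norm. -/
def H1normSq (u : EuclideanSpace ℝ (Fin N) → ℝ) : ℝ :=
  ∫ x, (u x ^ 2 + ‖gradient u x‖ ^ 2)

/-- The standard `H¹` inner product. -/
def H1inner (u v : EuclideanSpace ℝ (Fin N) → ℝ) : ℝ :=
  ∫ x, (u x * v x + (inner ℝ (gradient u x) (gradient v x) : ℝ))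

/-- Strong (norm) convergence of a sequence in `H¹`. -/
def H1Tendsto (uk : ℕ → EuclideanSpace ℝ (Fin N) → ℝ)
    (u : EuclideanSpace ℝ (Fin N) → ℝ) : Prop :=
  Tendsto (fun k => H1normSq (uk k - u)) atTop (𝓝 0)

/-- Weak convergence of a sequence in `H¹`. -/
def H1WeakTendsto (vk : ℕ → EuclideanSpace ℝ (Fin N) → ℝ)
    (v : EuclideanSpace ℝ (Fin N) → ℝ) : Prop :=
  ∀ w, InH1 w → Tendsto (fun k => H1inner (vk k) w) atTop (𝓝 (H1inner v w))

/-- `u` is nonzero as an element of `H¹`, i.e. not a.e. zero. -/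
def AEnonzero (u : EuclideanSpace ℝ (Fin N) → ℝ) : Prop :=
  ¬ (u =ᵐ[volume] (0 : EuclideanSpace ℝ (Fin N) → ℝ))

/-- `K_u(v) = ∫ |u|^{p-2} v²`. -/
def Kf (p : ℝ) (u v : EuclideanSpace ℝ (Fin N) → ℝ) : ℝ :=
  ∫ x, |u x| ^ (p - 2) * v x ^ 2

/-- `M_u = {v ∈ H¹ : K_u(v) = 1}`. -/
def MuSet (p : ℝ) (u : EuclideanSpace ℝ (Fin N) → ℝ) :
    Set (EuclideanSpace ℝ (Fin N) → ℝ) :=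
  {v | InH1 v ∧ Kf p u v = 1}

/-- `μ₁(u) = inf {J(v) : v ∈ M_u}`. -/
def mu1 (V : EuclideanSpace ℝ (Fin N) → ℝ) (p : ℝ)
    (u : EuclideanSpace ℝ (Fin N) → ℝ) : ℝ :=
  sInf (Jf V '' MuSet p u)

/-- `v₁` is a minimizer of `J` over `M_u`. -/
def IsMin1 (V : EuclideanSpace ℝ (Fin N) → ℝ) (p : ℝ)
    (u v₁ : EuclideanSpace ℝ (Fin N) → ℝ) : Prop :=
  v₁ ∈ MuSet p u ∧ Jf V v₁ = mu1 V p u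

/-- `L_u(v) = ∫ |u|^{p-2} v₁(u) v`. -/
def Lf (p : ℝ) (u v₁ v : EuclideanSpace ℝ (Fin N) → ℝ) : ℝ :=
  ∫ x, |u x| ^ (p - 2) * v₁ x * v x

/-- `N_u = {v ∈ M_u : L_u(v) = 0}`. -/
def NuSet (p : ℝ) (u v₁ : EuclideanSpace ℝ (Fin N) → ℝ) :
    Set (EuclideanSpace ℝ (Fin N) → ℝ) :=
  {v | v ∈ MuSet p u ∧ Lf p u v₁ v = 0}

/-- `μ₂(u) = inf {J(v) : v ∈ N_u}`. -/
def mu2 (V : EuclideanSpace ℝ (Fin N) → ℝ) (p : ℝ)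
    (u v₁ : EuclideanSpace ℝ (Fin N) → ℝ) : ℝ :=
  sInf (Jf V '' NuSet p u v₁)

/-- `v₂` is a minimizer of `J` over `N_u`. -/
def IsMin2 (V : EuclideanSpace ℝ (Fin N) → ℝ) (p : ℝ)
    (u v₁ v₂ : EuclideanSpace ℝ (Fin N) → ℝ) : Prop :=
  v₂ ∈ NuSet p u v₁ ∧ Jf V v₂ = mu2 V p u v₁

/-- `v₁sel` is a choice of the unique a.e.-positive minimizer `v₁(u)` of `J` over `M_u`,
for every `u ∈ H¹ \ {0}`. -/
def IsV1Selection (V : EuclideanSpace ℝ (Fin N) → ℝ) (p : ℝ)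
    (v₁sel : (EuclideanSpace ℝ (Fin N) → ℝ) → EuclideanSpace ℝ (Fin N) → ℝ) : Prop :=
  ∀ u, InH1 u → AEnonzero u →
    IsMin1 V p u (v₁sel u) ∧ (∀ᵐ x ∂volume, 0 < v₁sel u x) ∧
    (∀ v, IsMin1 V p u v → v =ᵐ[volume] v₁sel u)

/-- `h(u) = ∫ |u|^{p-2} u v₁(u)`. -/
def hFun (p : ℝ)
    (v₁sel : (EuclideanSpace ℝ (Fin N) → ℝ) → EuclideanSpace ℝ (Fin N) → ℝ)
    (u : EuclideanSpace ℝ (Fin N) → ℝ) : ℝ :=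
  ∫ x, |u x| ^ (p - 2) * u x * v₁sel u x

/-- `u` is a weak solution of `-Δu + V(x) u = λ |u|^{p-2} u` on `ℝ^N`. -/
def IsWeakSol (V : EuclideanSpace ℝ (Fin N) → ℝ) (p lam : ℝ)
    (u : EuclideanSpace ℝ (Fin N) → ℝ) : Prop :=
  ∀ w, InH1 w →
    (∫ x, ((inner ℝ (gradient u x) (gradient w x) : ℝ) + V x * u x * w x))
      = lam * ∫ x, |u x| ^ (p - 2) * u x * w x

/-- `u` changes sign: both `u⁺` and `u⁻` are nonzero on sets of positive measure. -/
def SignChanging (u : EuclideanSpace ℝ (Fin N) → ℝ) : Prop :=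
  volume {x | 0 < u x} ≠ 0 ∧ volume {x | u x < 0} ≠ 0

/-- The unit circle `S¹ ⊆ ℂ`. -/
abbrev Sph : Type := Metric.sphere (0 : ℂ) 1

/-- The set of minimax values `max_{u ∈ γ(S¹)} J(u)` over odd continuous maps
`γ : S¹ → Mset`, continuity being with respect to the `H¹` norm. -/
def minimaxVals (V : EuclideanSpace ℝ (Fin N) → ℝ)
    (Mset : Set (EuclideanSpace ℝ (Fin N) → ℝ)) : Set ℝ :=
  {c | ∃ γ : Sph → EuclideanSpace ℝ (Fin N) → ℝ,
    (∀ z, γ (-z) = -(γ z)) ∧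
    (∀ z : Sph, Tendsto (fun w => H1normSq (γ w - γ z)) (𝓝 z) (𝓝 0)) ∧
    (∀ z, γ z ∈ Mset) ∧ c = sSup (Jf V '' Set.range γ)}

/-- The second minimax level `λ₂`. -/
def lam2 (N : ℕ) (V : EuclideanSpace ℝ (Fin N) → ℝ) (p : ℝ) : ℝ :=
  sInf (minimaxVals V (Msphere N p))

/-- The ground-state level `λ₁^∞` of the problem at infinity. -/
def lam1infty (N : ℕ) (p : ℝ) (Vinf : ℝ) : ℝ :=
  sInf (Jf (fun _ => Vinf) '' Msphere N p)

/-- `u` is a radial function. -/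
def IsRadial (u : EuclideanSpace ℝ (Fin N) → ℝ) : Prop :=
  ∀ x y : EuclideanSpace ℝ (Fin N), ‖x‖ = ‖y‖ → u x = u y

/-- `M_r = M ∩ H¹_r`. -/
def MsphereR (N : ℕ) (p : ℝ) : Set (EuclideanSpace ℝ (Fin N) → ℝ) :=
  {u | u ∈ Msphere N p ∧ IsRadial u}

/-- The second radial minimax level `λ_{2,r}`. -/
def lam2r (N : ℕ) (V : EuclideanSpace ℝ (Fin N) → ℝ) (p : ℝ) : ℝ :=
  sInf (minimaxVals V (MsphereR N p))

/-- The `L^p` norm. -/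
def LpNorm (p : ℝ) (u : EuclideanSpace ℝ (Fin N) → ℝ) : ℝ :=
  (∫ x, |u x| ^ p) ^ (1 / p)

/-- The decay property of nonnegative ground states: any nonnegative minimizer of `J`
over `M` decays at least like `C e^{-a₀ |x|}`. -/
def GroundStateDecay (N : ℕ) (V : EuclideanSpace ℝ (Fin N) → ℝ) (p a₀ : ℝ) : Prop :=
  ∃ C > (0 : ℝ), ∀ w₁ ∈ Msphere N p, (∀ x, 0 ≤ w₁ x) →
    Jf V w₁ = sInf (Jf V '' Msphere N p) →
    ∀ x, w₁ x ≤ C * Real.exp (-a₀ * ‖x‖)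

/-!
On the span of `v₁, v₂` the weighted form is diagonal: `K_u(a v₁ + b v₂) = a² + b²`, because
`K_u(v₁) = K_u(v₂) = 1` and `L_u(v₂) = 0`; this alone gives linear independence. Expanding `J`
gives `J(a v₁ + b v₂) = a² μ₁ + 2ab B(v₁, v₂) + b² μ₂` with `B` the polarization of `J`. As `μ₁`
is the infimum of the Rayleigh quotient `J / K_u`, the quadratic `t ↦ 2t B(v₁, v₂) + t² (μ₂ - μ₁)`
is nonnegative, so `B(v₁, v₂) = 0`, and `J ≤ μ₂ K_u` on the span follows from `μ₁ ≤ μ₂`.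
-/

lemma integral_quadratic_combination {α : Type*} [MeasurableSpace α] {μ : Measure α}
    {f g h : α → ℝ} (hf : Integrable f μ) (hg : Integrable g μ) (hh : Integrable h μ)
    (a b : ℝ) :
    ∫ x, (a ^ 2 * f x + 2 * a * b * g x + b ^ 2 * h x) ∂μ
      = a ^ 2 * ∫ x, f x ∂μ + 2 * a * b * ∫ x, g x ∂μ + b ^ 2 * ∫ x, h x ∂μ := by
  have hfg : Integrable (fun x => a ^ 2 * f x + 2 * a * b * g x) μ :=
    (hf.const_mul _).add (hg.const_mul _)
  rw [integral_add hfg (hh.const_mul _), integral_add (hf.const_mul _) (hg.const_mul _),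
    integral_const_mul, integral_const_mul, integral_const_mul]

lemma integrable_inner_of_memLp_two {α E : Type*} [MeasurableSpace α] {μ : Measure α}
    [NormedAddCommGroup E] [InnerProductSpace ℝ E] {f g : α → E}
    (hf : MemLp f 2 μ) (hg : MemLp g 2 μ) : Integrable (fun x => inner ℝ (f x) (g x)) μ :=
  (L2.integrable_inner (𝕜 := ℝ) hf.toLp hg.toLp).congr <| by
    filter_upwards [hf.coeFn_toLp, hg.coeFn_toLp] with x hfx hgx
    rw [hfx, hgx]

/-- Domination by `W (v² + w²) / 2`. -/
lemma integrable_weight_mul_mul {α : Type*} [MeasurableSpace α] {μ : Measure α}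
    {W v w : α → ℝ} (hW : ∀ x, 0 ≤ W x) (hWm : AEStronglyMeasurable W μ)
    (hvm : AEStronglyMeasurable v μ) (hwm : AEStronglyMeasurable w μ)
    (hv : Integrable (fun x => W x * v x ^ 2) μ) (hw : Integrable (fun x => W x * w x ^ 2) μ) :
    Integrable (fun x => W x * v x * w x) μ := by
  refine ((hv.add hw).const_mul (1 / 2)).mono' ((hWm.mul hvm).mul hwm) (ae_of_all _ fun x => ?_)
  rw [Pi.add_apply, Real.norm_eq_abs, abs_mul, abs_mul, abs_of_nonneg (hW x), ← sq_abs (v x),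
    ← sq_abs (w x)]
  linarith [mul_nonneg (hW x) (sq_nonneg (|v x| - |w x|))]

lemma eq_zero_of_forall_two_mul_mul_add_sq_mul_nonneg {B d : ℝ}
    (h : ∀ t : ℝ, 0 ≤ 2 * t * B + t ^ 2 * d) : B = 0 := by
  have hmin : IsLocalMin (fun t : ℝ => 2 * t * B + t ^ 2 * d) 0 :=
    (isMinOn_univ_iff.2 fun t => by simpa using h t).isLocalMin univ_mem
  have hderiv : HasDerivAt (fun t : ℝ => 2 * t * B + t ^ 2 * d) (2 * B) 0 := by
    simpa using (((hasDerivAt_id (0 : ℝ)).const_mul 2).mul_const B).fun_add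
      ((hasDerivAt_pow 2 (0 : ℝ)).mul_const d)
  linarith [hmin.hasDerivAt_eq_zero hderiv]

section Gradient

variable {F : Type*} [NormedAddCommGroup F] [InnerProductSpace ℝ F] [CompleteSpace F]
  {v w : F → ℝ}

lemma aestronglyMeasurable_gradient [MeasurableSpace F] [BorelSpace F]
    [SecondCountableTopology F] {μ : Measure F} (f : F → ℝ) :
    AEStronglyMeasurable (gradient f) μ :=
  ((InnerProductSpace.toDual ℝ F).symm.continuous.measurable.comp
    (measurable_fderiv ℝ f)).aestronglyMeasurable

lemma gradient_const_mul (hv : Differentiable ℝ v) (c : ℝ) (x : F) :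
    gradient (fun y => c * v y) x = c • gradient v x := by
  rw [((hv x).hasFDerivAt.const_mul c).hasGradientAt.gradient, _root_.map_smul]
  rfl

lemma gradient_add (hv : Differentiable ℝ v) (hw : Differentiable ℝ w) (x : F) :
    gradient (fun y => v y + w y) x = gradient v x + gradient w x := by
  rw [((hv x).hasFDerivAt.fun_add (hw x).hasFDerivAt).hasGradientAt.gradient, map_add]
  rfl

end Gradient

section Sobolev

variable {v w : EuclideanSpace ℝ (Fin N) → ℝ}

lemma InH1.memLp_gradient (hv : InH1 v) : MemLp (gradient v) 2 volume :=
  (memLp_norm_iff (aestronglyMeasurable_gradient v)).1 hv.2.2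

lemma InH1.const_mul (hv : InH1 v) (c : ℝ) : InH1 (fun x => c * v x) := by
  refine ⟨hv.1.const_mul c, hv.2.1.const_mul c, ?_⟩
  simp_rw [gradient_const_mul hv.2.1 c]
  exact (hv.memLp_gradient.const_smul c).norm

lemma InH1.add (hv : InH1 v) (hw : InH1 w) : InH1 (fun x => v x + w x) := by
  refine ⟨hv.1.add hw.1, hv.2.1.add hw.2.1, ?_⟩
  simp_rw [gradient_add hv.2.1 hw.2.1]
  exact (hv.memLp_gradient.add hw.memLp_gradient).norm

end Sobolev

section Functionals

variable {V u v w : EuclideanSpace ℝ (Fin N) → ℝ} {p : ℝ}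

def Jbilin (V v w : EuclideanSpace ℝ (Fin N) → ℝ) : ℝ :=
  ∫ x, ((inner ℝ (gradient v x) (gradient w x) : ℝ) + V x * v x * w x)

lemma Jf_nonneg (hV0 : ∀ x, 0 ≤ V x) : 0 ≤ Jf V v :=
  integral_nonneg fun x => add_nonneg (sq_nonneg _) (mul_nonneg (hV0 x) (sq_nonneg _))

lemma Kf_nonneg : 0 ≤ Kf p u v :=
  integral_nonneg fun _ => mul_nonneg (Real.rpow_nonneg (abs_nonneg _) _) (sq_nonneg _)

lemma Jf_const_mul (hv : Differentiable ℝ v) (c : ℝ) :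
    Jf V (fun x => c * v x) = c ^ 2 * Jf V v := by
  rw [Jf, Jf, ← integral_const_mul]
  congr 1 with x
  rw [gradient_const_mul hv, norm_smul, mul_pow, Real.norm_eq_abs, sq_abs]
  ring

lemma Kf_const_mul (c : ℝ) : Kf p u (fun x => c * v x) = c ^ 2 * Kf p u v := by
  rw [Kf, Kf, ← integral_const_mul]
  congr 1 with x
  ring

lemma Jf_linear_combination (hV : MemLp V ⊤ volume) (hv : InH1 v) (hw : InH1 w) (a b : ℝ) :
    Jf V (fun x => a * v x + b * w x)
      = a ^ 2 * Jf V v + 2 * a * b * Jbilin V v w + b ^ 2 * Jf V w := by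
  have integrable_integrand {f : EuclideanSpace ℝ (Fin N) → ℝ} (hf : InH1 f) :
      Integrable (fun x => ‖gradient f x‖ ^ 2 + V x * f x ^ 2) volume :=
    hf.2.2.integrable_sq.add (hf.1.integrable_sq.mul_of_top_right hV)
  have integrable_cross : Integrable
      (fun x => (inner ℝ (gradient v x) (gradient w x) : ℝ) + V x * v x * w x) volume := by
    refine (integrable_inner_of_memLp_two hv.memLp_gradient hw.memLp_gradient).add ?_
    simpa only [Pi.mul_def, mul_assoc] using (hv.1.integrable_mul hw.1).mul_of_top_right hV
  unfold Jf Jbilin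
  rw [← integral_quadratic_combination (integrable_integrand hv) integrable_cross
    (integrable_integrand hw)]
  congr 1 with x
  rw [gradient_add (hv.2.1.const_mul a) (hw.2.1.const_mul b), gradient_const_mul hv.2.1,
    gradient_const_mul hw.2.1, norm_add_sq_real]
  simp only [norm_smul, Real.norm_eq_abs, real_inner_smul_left, real_inner_smul_right, mul_pow,
    sq_abs]
  ring

lemma Kf_linear_combination (hu : AEStronglyMeasurable u volume)
    (hv : AEStronglyMeasurable v volume) (hw : AEStronglyMeasurable w volume)
    (hKv : Integrable (fun x => |u x| ^ (p - 2) * v x ^ 2) volume)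
    (hKw : Integrable (fun x => |u x| ^ (p - 2) * w x ^ 2) volume) (a b : ℝ) :
    Kf p u (fun x => a * v x + b * w x)
      = a ^ 2 * Kf p u v + 2 * a * b * Lf p u v w + b ^ 2 * Kf p u w := by
  have hL := integrable_weight_mul_mul (fun x => Real.rpow_nonneg (abs_nonneg (u x)) (p - 2))
    (hu.aemeasurable.abs.pow_const _).aestronglyMeasurable hv hw hKv hKw
  unfold Kf Lf
  rw [← integral_quadratic_combination hKv hL hKw]
  congr 1 with x
  ring

lemma mu1_le_Jf (hV0 : ∀ x, 0 ≤ V x) (hv : v ∈ MuSet p u) : mu1 V p u ≤ Jf V v :=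
  csInf_le ⟨0, by rintro _ ⟨f, -, rfl⟩; exact Jf_nonneg hV0⟩ (Set.mem_image_of_mem _ hv)

lemma mu1_mul_Kf_le_Jf (hV0 : ∀ x, 0 ≤ V x) (hv : InH1 v) : mu1 V p u * Kf p u v ≤ Jf V v := by
  rcases Kf_nonneg.eq_or_lt with hK | hK
  · rw [← hK, mul_zero]
    exact Jf_nonneg hV0
  set c := (√(Kf p u v))⁻¹
  have hc : c ^ 2 * Kf p u v = 1 := by
    rw [inv_pow, Real.sq_sqrt hK.le, inv_mul_cancel₀ hK.ne']
  have hmu := mu1_le_Jf hV0 ⟨hv.const_mul c, (Kf_const_mul c).trans hc⟩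
  rw [Jf_const_mul hv.2.1] at hmu
  calc mu1 V p u * Kf p u v ≤ c ^ 2 * Jf V v * Kf p u v :=
        mul_le_mul_of_nonneg_right hmu hK.le
    _ = Jf V v := by rw [mul_right_comm, hc, one_mul]

end Functionals

theorem v1_v2_independent_and_span_estimate_general (N : ℕ) (p : ℝ)
    (V : EuclideanSpace ℝ (Fin N) → ℝ)
    (hVbdd : MemLp V ⊤ volume) (hV0 : ∀ x, 0 ≤ V x)
    (u v₁ v₂ : EuclideanSpace ℝ (Fin N) → ℝ) (hu : InH1 u)
    (hv₁ : IsMin1 V p u v₁) (hv₂ : IsMin2 V p u v₁ v₂) :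
    (∀ c₁ c₂ : ℝ,
      (fun x => c₁ * v₁ x + c₂ * v₂ x) =ᵐ[volume]
        (0 : EuclideanSpace ℝ (Fin N) → ℝ) → c₁ = 0 ∧ c₂ = 0) ∧
    (∀ c₁ c₂ : ℝ,
      Jf V (fun x => c₁ * v₁ x + c₂ * v₂ x)
        ≤ mu2 V p u v₁ * Kf p u (fun x => c₁ * v₁ x + c₂ * v₂ x)) := by
  obtain ⟨⟨hv₁H1, hv₁K⟩, hv₁J⟩ := hv₁
  obtain ⟨⟨⟨hv₂H1, hv₂K⟩, hv₂L⟩, hv₂J⟩ := hv₂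
  have hK (a b : ℝ) : Kf p u (fun x => a * v₁ x + b * v₂ x) = a ^ 2 + b ^ 2 := by
    rw [Kf_linear_combination hu.1.1 hv₁H1.1.1 hv₂H1.1.1
      (.of_integral_ne_zero (by rw [← Kf, hv₁K]; norm_num))
      (.of_integral_ne_zero (by rw [← Kf, hv₂K]; norm_num)), hv₁K, hv₂K, hv₂L]
    ring
  have hJ (a b : ℝ) : Jf V (fun x => a * v₁ x + b * v₂ x)
      = a ^ 2 * mu1 V p u + 2 * a * b * Jbilin V v₁ v₂ + b ^ 2 * mu2 V p u v₁ := by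
    rw [Jf_linear_combination hVbdd hv₁H1 hv₂H1, hv₁J, hv₂J]
  have hB : Jbilin V v₁ v₂ = 0 :=
    eq_zero_of_forall_two_mul_mul_add_sq_mul_nonneg (d := mu2 V p u v₁ - mu1 V p u) fun t => by
      have h := mu1_mul_Kf_le_Jf (u := u) (p := p) hV0
        ((hv₁H1.const_mul 1).add (hv₂H1.const_mul t))
      rw [hK, hJ] at h
      linear_combination h
  have hmu : mu1 V p u ≤ mu2 V p u v₁ := hv₂J ▸ mu1_le_Jf hV0 ⟨hv₂H1, hv₂K⟩
  refine ⟨fun a b hab => ?_, fun a b => ?_⟩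
  · have h0 : a ^ 2 + b ^ 2 = 0 := by
      rw [← hK, Kf, integral_eq_zero_of_ae]
      filter_upwards [hab] with x hx
      rw [show a * v₁ x + b * v₂ x = 0 from hx, sq, mul_zero, mul_zero, Pi.zero_apply]
    exact ⟨by nlinarith, by nlinarith⟩
  · rw [hJ, hK, hB]
    nlinarith [mul_le_mul_of_nonneg_left hmu (sq_nonneg a)]

theorem v1_v2_independent_and_span_estimate (N : ℕ) (hN : 2 ≤ N)
    (p : ℝ) (hp : Subcritical N p)
    (V : EuclideanSpace ℝ (Fin N) → ℝ) (Vinf : ℝ)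
    (hVbdd : MemLp V ⊤ volume) (hV0 : ∀ x, 0 ≤ V x)
    (hVlim : Tendsto V (cocompact (EuclideanSpace ℝ (Fin N))) (𝓝 Vinf))
    (hVinf : 0 < Vinf)
    (u v₁ v₂ : EuclideanSpace ℝ (Fin N) → ℝ)
    (hu : InH1 u) (hu0 : AEnonzero u)
    (hv₁ : IsMin1 V p u v₁) (hv₁pos : ∀ᵐ x ∂volume, 0 < v₁ x)
    (hv₂ : IsMin2 V p u v₁ v₂) :
    (∀ c₁ c₂ : ℝ,
      (fun x => c₁ * v₁ x + c₂ * v₂ x) =ᵐ[volume]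
        (0 : EuclideanSpace ℝ (Fin N) → ℝ) → c₁ = 0 ∧ c₂ = 0) ∧
    (∀ c₁ c₂ : ℝ,
      Jf V (fun x => c₁ * v₁ x + c₂ * v₂ x)
        ≤ mu2 V p u v₁ * Kf p u (fun x => c₁ * v₁ x + c₂ * v₂ x)) :=
  v1_v2_independent_and_span_estimate_general N p V hVbdd hV0 u v₁ v₂ hu hv₁ hv₂

end ScalarField
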